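/- Analogical proportions are not preserved by quotients: there is a monounary algebra A with universe {a, a', b, b', c, d}, S(a) = b', S(a') = b, S(b) = b, S(b') = b', S(c) = c, S(d) = d, in which a : b :: c : d holds (since Jus(a,b) ∪ Jus(c,d) contains no justifications, so the proportion holds trivially), while in the factor algebra A/θ by the congruence θ with classes {a, a'}, {b, b'}, {c}, {d} (where S([a]) = [b], S([b]) = [b], S([c]) = [c], S([d]) = [d]) the proportion [a] : [b] :: [c] : [d] fails. -/
import Mathlib


/-- The set of justifications of a pair `(x, y)` in the monounary algebra `(A, S)`:
pairs `(k, ℓ)` such that `S^[k] o = x` and `S^[ℓ] o = y` for some `o`. -/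
def Jus {A : Type*} (S : A → A) (x y : A) : Set (ℕ × ℕ) :=
  {p | ∃ o : A, S^[p.1] o = x ∧ S^[p.2] o = y}

/-- The arrow proportion `x → y ∴ u → v` in the monounary algebra `(A, S)`. -/
def ArrowP {A : Type*} (S : A → A) (x y u v : A) : Prop :=
  (∀ p ∈ Jus S x y ∪ Jus S u v, p.1 = p.2) ∨
  ((Jus S x y ∩ Jus S u v).Nonempty ∧
    ∀ v' : A, Jus S x y ∩ Jus S u v ⊆ Jus S x y ∩ Jus S u v' →
      Jus S x y ∩ Jus S u v' ⊆ Jus S x y ∩ Jus S u v)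

/-- The analogical proportion `a : b :: c : d` in the monounary algebra `(A, S)`. -/
def AP {A : Type*} (S : A → A) (a b c d : A) : Prop :=
  ArrowP S a b c d ∧ ArrowP S b a d c ∧ ArrowP S c d a b ∧ ArrowP S d c b a

/-- Universe {a, a', b, b', c, d} = {0,…,5} with S(a)=b', S(a')=b, S(b)=b, S(b')=b',
S(c)=c, S(d)=d. -/
def S17 : Fin 6 → Fin 6 :=
  ![3, 2, 2, 3, 4, 5]

/-- The factor algebra with classes {[a], [b], [c], [d]} = {0, 1, 2, 3} and
S([a]) = [b], S([b]) = [b], S([c]) = [c], S([d]) = [d]. -/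
def S17q : Fin 4 → Fin 4 :=
  ![1, 1, 2, 3]

lemma iter_cases {A : Type*} (S : A → A) (hS : ∀ o, S (S o) = S o) :
    ∀ (k : ℕ) (o : A), S^[k] o = o ∨ S^[k] o = S o := by
  intro k
  induction k with
  | zero => intro o; left; rfl
  | succ n ih =>
    intro o
    right
    rw [Function.iterate_succ_apply]
    rcases ih (S o) with h | h
    · exact h
    · rw [h, hS]

lemma jus_empty {A : Type*} (S : A → A) (hS : ∀ o, S (S o) = S o) (x y : A)
    (h : ∀ o : A, ¬((o = x ∨ S o = x) ∧ (o = y ∨ S o = y))) : Jus S x y = ∅ := by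
  ext ⟨k, l⟩
  simp only [Jus, Set.mem_setOf_eq, Set.mem_empty_iff_false, iff_false]
  rintro ⟨o, hx, hy⟩
  refine h o ⟨?_, ?_⟩
  · rcases iter_cases S hS k o with h' | h'
    · exact Or.inl (h'.symm.trans hx)
    · exact Or.inr (h'.symm.trans hx)
  · rcases iter_cases S hS l o with h' | h'
    · exact Or.inl (h'.symm.trans hy)
    · exact Or.inr (h'.symm.trans hy)

lemma hS17 : ∀ o, S17 (S17 o) = S17 o := by decide

lemma hS17q : ∀ o, S17q (S17q o) = S17q o := by decide

lemma j02 : Jus S17 0 2 = ∅ := jus_empty S17 hS17 0 2 (by decide)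
lemma j20 : Jus S17 2 0 = ∅ := jus_empty S17 hS17 2 0 (by decide)
lemma j45 : Jus S17 4 5 = ∅ := jus_empty S17 hS17 4 5 (by decide)
lemma j54 : Jus S17 5 4 = ∅ := jus_empty S17 hS17 5 4 (by decide)
lemma jq23 : Jus S17q 2 3 = ∅ := jus_empty S17q hS17q 2 3 (by decide)

theorem proportion_not_preserved_by_quotient :
    AP S17 0 2 4 5 ∧ ¬ AP S17q 0 1 2 3 := by
  constructor
  · refine ⟨?_, ?_, ?_, ?_⟩
    · left; intro p hp
      rw [Set.mem_union, j02, j45] at hp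
      simp at hp
    · left; intro p hp
      rw [Set.mem_union, j20, j54] at hp
      simp at hp
    · left; intro p hp
      rw [Set.mem_union, j45, j02] at hp
      simp at hp
    · left; intro p hp
      rw [Set.mem_union, j54, j20] at hp
      simp at hp
  · rintro ⟨h1, -, -, -⟩
    rcases h1 with h | ⟨⟨p, hp⟩, -⟩
    · have hmem : ((0, 1) : ℕ × ℕ) ∈ Jus S17q 0 1 ∪ Jus S17q 2 3 :=
        Or.inl ⟨0, by decide, by decide⟩
      exact absurd (h _ hmem) (by decide)
    · have := hp.2
      rw [jq23] at this
      exact this
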